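/- Let n0, n1 ≥ 1 be natural numbers, n := n0 + n1, and h ≥ 1. Then the number of binary sequences x in B_{n0,n1} with τ(x) = 2h satisfies h · |{x ∈ B_{n0,n1} : τ(x) = 2h}| = (n − 2h) · C(n0 − 1, h − 1) · C(n1 − 1, h − 1), where C(a,b) denotes the binomial coefficient. -/

import Mathlib

/-- The number of jumps `τ(x) = |{i ∈ [n-1] : x_i ≠ x_{i+1}}|` of a binary sequence
`x ∈ {0,1}^n`. -/
def tau {n : ℕ} (x : Fin n → Bool) : ℕ :=
  (Finset.univ.filter (fun i : Fin n =>
    ∃ h : (i : ℕ) + 1 < n, x i ≠ x ⟨(i : ℕ) + 1, h⟩)).card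

/-- `B_{n0,n1}`, the set of binary sequences of length `n0 + n1` with exactly
`n0` zeros and `n1` ones. -/
def Bseq (n0 n1 : ℕ) : Finset (Fin (n0 + n1) → Bool) :=
  Finset.univ.filter (fun x =>
    (Finset.univ.filter (fun i => x i = false)).card = n0 ∧
    (Finset.univ.filter (fun i => x i = true)).card = n1)

/-!
A sequence that starts with `s` and has `t` jumps consists of `t / 2 + 1` runs of `s`
alternating with `(t + 1) / 2` runs of `!s`, so the number of such sequences with `a` copies
of `s` and `b` copies of `!s` is a product of two composition numbers,
`C(a - 1, t / 2) * C(b - 1, (t + 1) / 2 - 1)`. We prove this by removing the first bit, which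
turns the count into Pascal's rule for compositions. For `t = 2h` the two possible first bits
contribute `C(n0 - 1, h) C(n1 - 1, h - 1) + C(n1 - 1, h) C(n0 - 1, h - 1)`, and
`h C(m, h) = (m - h + 1) C(m, h - 1)` turns `h` times this sum into the right-hand side.
-/

open Finset

theorem tau_eq_card_castSucc_ne_succ {n : ℕ} (x : Fin (n + 1) → Bool) :
    tau x = #{i : Fin n | x i.castSucc ≠ x i.succ} := by
  rw [tau, card_filter, card_filter, Fin.sum_univ_castSucc]
  simp
  rfl

theorem tau_fin_one (x : Fin 1 → Bool) : tau x = 0 := by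
  simp [tau_eq_card_castSucc_ne_succ]

theorem tau_cons {n : ℕ} (s : Bool) (y : Fin (n + 1) → Bool) :
    tau (Fin.cons s y : Fin (n + 2) → Bool) = tau y + if s = y 0 then 0 else 1 := by
  simp [tau_eq_card_castSucc_ne_succ, Fin.card_filter_univ_succ', add_comm]

theorem card_filter_cons_apply_eq {n : ℕ} (s c : Bool) (y : Fin n → Bool) :
    #{i | (Fin.cons s y : Fin (n + 1) → Bool) i = c} = #{i | y i = c} + if s = c then 1 else 0 := by
  simp [Fin.card_filter_univ_succ', add_comm]

theorem card_filter_apply_zero_eq_and {n : ℕ} (s : Bool) (P : (Fin (n + 1) → Bool) → Prop)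
    [DecidablePred P] :
    #{x | x 0 = s ∧ P x} = #{y : Fin n → Bool | P (Fin.cons s y)} := by
  refine card_nbij' Fin.tail (fun y => Fin.cons s y) ?_ ?_ ?_ ?_ <;> intro x hx <;>
    simp only [coe_filter, Set.mem_ofPred_eq, mem_univ, true_and] at hx ⊢
  · rw [← hx.1, Fin.cons_self_tail]
    exact hx.2
  · simpa using hx
  · rw [← hx.1]
    exact Fin.cons_self_tail x
  · exact Fin.tail_cons _ _

/-- The number of compositions of `a` into `k` positive parts. -/
def compositionCount : ℕ → ℕ → ℕ
  | 0, 0 => 1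
  | 0, _ + 1 => 0
  | _ + 1, 0 => 0
  | a + 1, k + 1 => compositionCount a (k + 1) + compositionCount a k

theorem compositionCount_succ_succ (a k : ℕ) :
    compositionCount (a + 1) (k + 1) = a.choose k := by
  induction a generalizing k with
  | zero => cases k <;> rfl
  | succ a ih =>
    cases k with
    | zero => rw [compositionCount, ih]; simp [compositionCount]
    | succ k => rw [compositionCount, ih, ih, Nat.choose_succ_succ', add_comm]

def headCount (n : ℕ) (s : Bool) (a b t : ℕ) : ℕ :=
  #{x : Fin (n + 1) → Bool | x 0 = s ∧ #{i | x i = s} = a ∧ #{i | x i = !s} = b ∧ tau x = t}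

theorem headCount_zero (s : Bool) (a b t : ℕ) :
    headCount 0 s a b t = if a = 1 ∧ b = 0 ∧ t = 0 then 1 else 0 := by
  rw [headCount, card_filter_apply_zero_eq_and]
  simp only [card_filter_cons_apply_eq, tau_fin_one]
  simp [eq_comm, apply_ite card]

theorem headCount_zero_count_eq_zero (n : ℕ) (s : Bool) (b t : ℕ) : headCount n s 0 b t = 0 := by
  simp only [headCount, card_eq_zero, filter_eq_empty_iff]
  rintro x - ⟨hx0, hs, -⟩
  exact hs (mem_univ 0) hx0

theorem headCount_succ (n : ℕ) (s : Bool) (a b t : ℕ) :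
    headCount (n + 1) s (a + 1) b t = headCount n s a b t +
      #{y : Fin (n + 1) → Bool | y 0 = !s ∧ #{i | y i = !s} = b ∧ #{i | y i = s} = a ∧
        tau y + 1 = t} := by
  rw [headCount, card_filter_apply_zero_eq_and,
    ← card_filter_add_card_filter_not (fun y => y 0 = s), filter_filter, filter_filter, headCount]
  simp only [card_filter_cons_apply_eq, tau_cons]
  congr 2 <;> ext y <;> by_cases h : y 0 = s <;> simp [h, Ne.symm, Bool.eq_not_iff]
  tauto

theorem headCount_succ_zero (n : ℕ) (s : Bool) (a b : ℕ) :
    headCount (n + 1) s (a + 1) b 0 = headCount n s a b 0 := by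
  simp [headCount_succ]

theorem headCount_succ_succ (n : ℕ) (s : Bool) (a b t : ℕ) :
    headCount (n + 1) s (a + 1) b (t + 1) =
      headCount n s a b (t + 1) + headCount n (!s) b a t := by
  rw [headCount_succ]
  congr 1
  simp [headCount]

theorem headCount_eq {n a b : ℕ} (hab : a + b = n + 1) (s : Bool) (t : ℕ) :
    headCount n s a b t = compositionCount a (t / 2 + 1) * compositionCount b ((t + 1) / 2) := by
  induction n generalizing s a b t with
  | zero =>
    rw [headCount_zero]
    obtain ⟨rfl, rfl⟩ | ⟨rfl, rfl⟩ : a = 0 ∧ b = 1 ∨ a = 1 ∧ b = 0 := by omega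
    · simp [compositionCount]
    · rcases t with _ | t
      · rfl
      · simp [compositionCount, show (t + 2) / 2 = t / 2 + 1 by omega]
  | succ n ih =>
    rcases a with _ | a
    · rw [headCount_zero_count_eq_zero, compositionCount, zero_mul]
    rcases t with _ | t
    · rw [headCount_succ_zero, ih (by omega)]
      rcases a with _ | a
      · obtain ⟨b, rfl⟩ : ∃ b', b = b' + 1 := ⟨b - 1, by omega⟩
        simp [compositionCount]
      · simp [compositionCount]
    · rw [headCount_succ_succ, ih (by omega), ih (by omega),
        show (t + 1 + 1) / 2 = t / 2 + 1 by omega, compositionCount]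
      ring

theorem card_filter_tau_eq_headCount_add {n m : ℕ} (hn : n = m + 1) (a b t : ℕ) :
    #{x : Fin n → Bool | (#{i | x i = false} = a ∧ #{i | x i = true} = b) ∧ tau x = t} =
      headCount m false a b t + headCount m true b a t := by
  subst hn
  rw [← card_filter_add_card_filter_not (fun x => x 0 = false), filter_filter, filter_filter,
    headCount, headCount]
  congr 2 <;> ext x <;> simp <;> tauto

theorem succ_mul_choose_mul_choose_add (a b k : ℕ) :
    (k + 1) * (a.choose (k + 1) * b.choose k + b.choose (k + 1) * a.choose k) =
      (a + b - 2 * k) * a.choose k * b.choose k := by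
  have hsucc (c : ℕ) : (k + 1) * c.choose (k + 1) = c.choose k * (c - k) := by
    rw [mul_comm, Nat.choose_succ_right_eq]
  by_cases hk : k ≤ a ∧ k ≤ b
  · rw [show a + b - 2 * k = (a - k) + (b - k) by omega]
    linear_combination (b.choose k) * hsucc a + (a.choose k) * hsucc b
  · rcases not_and_or.mp hk with hk | hk <;> have hk := not_le.mp hk <;>
      simp [Nat.choose_eq_zero_of_lt hk, Nat.choose_eq_zero_of_lt (Nat.lt_succ_of_lt hk)]

theorem stmt_3 (n0 n1 h : ℕ) (h0 : 1 ≤ n0) (h1 : 1 ≤ n1) (hh : 1 ≤ h) :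
    h * ((Bseq n0 n1).filter (fun x => tau x = 2 * h)).card =
      ((n0 + n1) - 2 * h) * Nat.choose (n0 - 1) (h - 1) * Nat.choose (n1 - 1) (h - 1) := by
  obtain ⟨a, rfl⟩ : ∃ a, n0 = a + 1 := ⟨n0 - 1, by omega⟩
  obtain ⟨b, rfl⟩ : ∃ b, n1 = b + 1 := ⟨n1 - 1, by omega⟩
  obtain ⟨k, rfl⟩ : ∃ k, h = k + 1 := ⟨h - 1, by omega⟩
  rw [Bseq, filter_filter, card_filter_tau_eq_headCount_add (m := a + b + 1) (by omega),
    headCount_eq (by omega), headCount_eq (by omega),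
    show 2 * (k + 1) / 2 + 1 = k + 1 + 1 by omega, show (2 * (k + 1) + 1) / 2 = k + 1 by omega,
    show a + 1 + (b + 1) - 2 * (k + 1) = a + b - 2 * k by omega]
  simp only [compositionCount_succ_succ, Nat.add_sub_cancel]
  exact succ_mul_choose_mul_choose_add a b k
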